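/- arXiv:1904.02544 — 6 statements merged into one kernel-verified Lean document; each statement's English description precedes it below -/
import Mathlib

section
/- Let f : B^n → B^n satisfy f_n(x,0) = f_n(x,1) for all x ∈ B^{n-1}, and let f̃ be the reduced function f̃_i(x) = f_i(x, f_n(x,0)). If A ⊆ B^n is a trap space for f, then the projection of A onto the first n-1 coordinates is a trap space for f̃. -/
/-!
The projection of the subspace `x[I]` is the subspace `(init x)[I ∖ {n}]`. For the trap
property, let `z ∈ A`. Since `f_n` ignores its last input, `f_n(z) = f_n(init z, 0)`, and the
state `(init z, f_n(z))` lies in `A`: it is `z` itself or the asynchronous successor of `z`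
in coordinate `n`. From this state every step of `f̃` at `init z` is the projection of a step
of `f`, so it stays in the projection of `A`.
-/

/-- One step of the fully asynchronous dynamics of a Boolean network `f`. -/
def asyncStep {ι : Type*} [DecidableEq ι] (f : (ι → Bool) → (ι → Bool))
    (x y : ι → Bool) : Prop :=
  ∃ i, f x i ≠ x i ∧ y = Function.update x i (!x i)

/-- A trap set: a set closed under the asynchronous dynamics. -/
def isTrapSet {ι : Type*} [DecidableEq ι] (f : (ι → Bool) → (ι → Bool))
    (A : Set (ι → Bool)) : Prop :=
  ∀ x ∈ A, ∀ y, asyncStep f x y → y ∈ A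

/-- A subspace `x[I] = {y | y_i = x_i for all i ∉ I}`. -/
def isSubspace {ι : Type*} (A : Set (ι → Bool)) : Prop :=
  ∃ (x : ι → Bool) (I : Set ι), A = {y | ∀ i ∉ I, y i = x i}

/-- A trap space: a trap set that is also a subspace. -/
def isTrapSpace {ι : Type*} [DecidableEq ι] (f : (ι → Bool) → (ι → Bool))
    (A : Set (ι → Bool)) : Prop :=
  isSubspace A ∧ isTrapSet f A

/-- Value of the last component of `f`, with the last input set to `false`. -/
def lastComp {n : ℕ} (f : (Fin (n + 1) → Bool) → (Fin (n + 1) → Bool))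
    (x : Fin n → Bool) : Bool :=
  f (Fin.snoc x false) (Fin.last n)

/-- The reduced function obtained by eliminating the last variable. -/
def reduced {n : ℕ} (f : (Fin (n + 1) → Bool) → (Fin (n + 1) → Bool))
    (x : Fin n → Bool) : Fin n → Bool :=
  fun i => f (Fin.snoc x (lastComp f x)) i.castSucc

theorem isSubspace.image_init {n : ℕ} {A : Set (Fin (n + 1) → Bool)} (hA : isSubspace A) :
    isSubspace (Fin.init '' A) := by
  obtain ⟨x, I, rfl⟩ := hA
  refine ⟨Fin.init x, {i | i.castSucc ∈ I}, ?_⟩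
  ext y
  constructor
  · rintro ⟨z, hz, rfl⟩ j hj
    exact hz j.castSucc hj
  · intro hy
    refine ⟨Fin.snoc y (x (Fin.last n)), fun i hi => ?_, Fin.init_snoc _ _⟩
    cases i using Fin.lastCases with
    | last => simp
    | cast j => simpa [Fin.init] using hy j hi

section

variable {n : ℕ} {f : (Fin (n + 1) → Bool) → (Fin (n + 1) → Bool)}

theorem asyncStep_snoc_of_asyncStep_reduced {y w : Fin n → Bool}
    (h : asyncStep (reduced f) y w) :
    asyncStep f (Fin.snoc y (lastComp f y)) (Fin.snoc w (lastComp f y)) := by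
  obtain ⟨i, hi, rfl⟩ := h
  exact ⟨i.castSucc, by simpa [reduced] using hi, by simp [Fin.snoc_update]⟩

variable (f) in
def LastCompIndepOfLast : Prop :=
  ∀ (x : Fin n → Bool) (a b : Bool),
    f (Fin.snoc x a) (Fin.last n) = f (Fin.snoc x b) (Fin.last n)

theorem lastComp_init_eq (hno : LastCompIndepOfLast f) (z : Fin (n + 1) → Bool) :
    lastComp f (Fin.init z) = f z (Fin.last n) := by
  simpa [lastComp, Fin.snoc_init_self] using hno (Fin.init z) false (z (Fin.last n))

theorem isTrapSet.snoc_lastComp_mem (hno : LastCompIndepOfLast f) {A : Set (Fin (n + 1) → Bool)}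
    (hA : isTrapSet f A) {z : Fin (n + 1) → Bool} (hz : z ∈ A) :
    Fin.snoc (Fin.init z) (lastComp f (Fin.init z)) ∈ A := by
  rw [lastComp_init_eq hno]
  by_cases h : f z (Fin.last n) = z (Fin.last n)
  · rwa [h, Fin.snoc_init_self]
  · have hstep := hA z hz _ ⟨Fin.last n, h, rfl⟩
    rwa [Bool.eq_not_of_ne h, ← Fin.update_snoc_last, Fin.snoc_init_self]

theorem isTrapSet.image_init (hno : LastCompIndepOfLast f) {A : Set (Fin (n + 1) → Bool)}
    (hA : isTrapSet f A) : isTrapSet (reduced f) (Fin.init '' A) := by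
  rintro _ ⟨z, hz, rfl⟩ w hw
  exact ⟨_, hA _ (hA.snoc_lastComp_mem hno hz) _ (asyncStep_snoc_of_asyncStep_reduced hw),
    Fin.init_snoc _ _⟩

end

theorem stmt2 {n : ℕ} (f : (Fin (n + 1) → Bool) → (Fin (n + 1) → Bool))
    (hno : ∀ (x : Fin n → Bool) (a b : Bool),
      f (Fin.snoc x a) (Fin.last n) = f (Fin.snoc x b) (Fin.last n))
    (A : Set (Fin (n + 1) → Bool)) (hA : isTrapSpace f A) :
    isTrapSpace (reduced f) (Fin.init '' A) :=
  ⟨hA.1.image_init, hA.2.image_init hno⟩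
end

section
/- For the reduced Boolean Delta-Notch system N over a graph with at least 2 vertices, for every vertex i there exists a fixed point x of N with x_i = 0 and x_j = 1 for all neighbours j of i. In particular, if L ≥ 2 then N admits at least two distinct fixed points. -/
/-- The reduced Boolean Delta-Notch system over the cell graph `G`:
`N_i(n) = ⋁_{j ∈ S(i)} ¬ n_j`. -/
def Nsys {L : ℕ} (G : SimpleGraph (Fin L)) [DecidableRel G.Adj]
    (x : Fin L → Bool) : Fin L → Bool :=
  fun i => decide (∃ j, G.Adj i j ∧ x j = false)

/-!
A state is a fixed point of `Nsys G` exactly when its set of `false` cells is a maximal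
independent set of `G`: independence makes `N` vanish on it, and maximality means that every
other cell has a neighbour in it, so `N` is `true` there. A maximal independent set containing a
given vertex `i` always exists and contains no neighbour of `i`. When `G` is connected with at
least two vertices, `i` has a neighbour `j`, and the fixed points obtained from `i` and from `j`
differ at `j`.
-/

namespace SimpleGraph

variable {V : Type*} {G : SimpleGraph V} {s : Set V}

theorem exists_adj_mem_of_maximal_isIndepSet (hs : Maximal G.IsIndepSet s) {v : V}
    (hv : v ∉ s) : ∃ u ∈ s, G.Adj v u := by
  by_contra! hnadj
  have hins : G.IsIndepSet (insert v s) :=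
    hs.prop.insert fun u hu _ => ⟨hnadj u hu, fun hadj => hnadj u hu hadj.symm⟩
  exact hv (hs.2 hins (Set.subset_insert v s) (Set.mem_insert v s))

theorem exists_maximal_isIndepSet_mem [Finite V] (v : V) :
    ∃ s, Maximal G.IsIndepSet s ∧ v ∈ s := by
  obtain ⟨s, hvs, hs⟩ :=
    Finite.exists_le_maximal (p := G.IsIndepSet) (Set.pairwise_singleton v _)
  exact ⟨s, hs, Set.singleton_subset_iff.mp hvs⟩

end SimpleGraph

open SimpleGraph

theorem Nsys_eq_self_iff {L : ℕ} (G : SimpleGraph (Fin L)) [DecidableRel G.Adj]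
    (x : Fin L → Bool) : Nsys G x = x ↔ Maximal G.IsIndepSet {j | x j = false} := by
  constructor
  · intro hx
    have hindep : G.IsIndepSet {j | x j = false} := fun a ha b hb _ hab => by
      have hNa : Nsys G x a = true := decide_eq_true ⟨b, hab, hb⟩
      simp_all
    refine ⟨hindep, fun t ht hst v hv => ?_⟩
    by_contra hxv
    have hNv : Nsys G x v = true := by simpa [hx] using hxv
    obtain ⟨u, hvu, hu⟩ := of_decide_eq_true hNv
    exact ht hv (hst hu) hvu.ne hvu
  · intro hs
    funext v
    cases hxv : x v
    · exact decide_eq_false fun ⟨u, hvu, hu⟩ => hs.prop hxv hu hvu.ne hvu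
    · obtain ⟨u, hu, hvu⟩ := exists_adj_mem_of_maximal_isIndepSet hs (v := v) (by simp [hxv])
      exact decide_eq_true ⟨u, hvu, hu⟩

theorem exists_Nsys_eq_self_apply_eq_false {L : ℕ} (G : SimpleGraph (Fin L))
    [DecidableRel G.Adj] (i : Fin L) :
    ∃ x : Fin L → Bool, Nsys G x = x ∧ x i = false ∧ ∀ j, G.Adj i j → x j = true := by
  classical
  obtain ⟨s, hs, his⟩ := G.exists_maximal_isIndepSet_mem i
  refine ⟨fun j => decide (j ∉ s), ?_, by simpa using his, fun j hij => ?_⟩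
  · rw [Nsys_eq_self_iff]
    simpa using hs
  · simpa using fun hjs => hs.prop his hjs hij.ne hij

theorem stmt4 {L : ℕ} (G : SimpleGraph (Fin L)) [DecidableRel G.Adj]
    (hL : 2 ≤ L) (hc : G.Connected) :
    (∀ i : Fin L, ∃ x : Fin L → Bool, Nsys G x = x ∧ x i = false ∧
        ∀ j, G.Adj i j → x j = true) ∧
      ∃ x y : Fin L → Bool, Nsys G x = x ∧ Nsys G y = y ∧ x ≠ y := by
  refine ⟨exists_Nsys_eq_self_apply_eq_false G, ?_⟩
  have : Nontrivial (Fin L) := Fin.nontrivial_iff_two_le.mpr hL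
  let i : Fin L := ⟨0, by omega⟩
  obtain ⟨j, hij⟩ := hc.preconnected.exists_adj_of_nontrivial i
  obtain ⟨x, hx, -, hxj⟩ := exists_Nsys_eq_self_apply_eq_false G i
  obtain ⟨y, hy, hyj, -⟩ := exists_Nsys_eq_self_apply_eq_false G j
  exact ⟨x, y, hx, hy, fun hxy => by simpa [hxy, hyj] using hxj j hij⟩
end

section
/- A subspace x[I] (with x a fixed point of N) is a trap space for the reduced Boolean Delta-Notch system N if and only if for every vertex i in S(I) ∩ I^c there exists a vertex j ∈ S(i) ∩ I^c with x_j = 0, where S(I) = ∪_{i∈I} S(i). -/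
/-- The subspace `x[I]`. -/
def subspace {ι : Type*} (x : ι → Bool) (I : Set ι) : Set (ι → Bool) :=
  {y | ∀ i ∉ I, y i = x i}

theorem isTrapSet_subspace_iff {ι : Type*} [DecidableEq ι] (f : (ι → Bool) → (ι → Bool))
    (x : ι → Bool) (I : Set ι) :
    isTrapSet f (subspace x I) ↔ ∀ y ∈ subspace x I, ∀ i ∉ I, f y i = x i := by
  constructor
  · intro htrap y hy i hi
    by_contra hne
    have hstep : asyncStep f y (Function.update y i (!y i)) := ⟨i, by rwa [hy i hi], rfl⟩
    have hflip := htrap y hy _ hstep i hi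
    rw [Function.update_self, hy i hi] at hflip
    exact Bool.not_ne_self (x i) hflip
  · rintro hstable y hy _ ⟨i, hne, rfl⟩ j hj
    by_cases hji : j = i
    · subst hji
      exact absurd ((hstable y hy j hj).trans (hy j hj).symm) hne
    · rw [Function.update_of_ne hji]
      exact hy j hj

section Nsys

variable {L : ℕ} (G : SimpleGraph (Fin L)) [DecidableRel G.Adj]

@[simp]
theorem Nsys_eq_true_iff (y : Fin L → Bool) (i : Fin L) :
    Nsys G y i = true ↔ ∃ j, G.Adj i j ∧ y j = false :=
  decide_eq_true_iff

theorem Nsys_congr {y z : Fin L → Bool} {i : Fin L} (h : ∀ j, G.Adj i j → y j = z j) :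
    Nsys G y i = Nsys G z i := by
  apply Bool.eq_iff_iff.mpr
  simp only [Nsys_eq_true_iff]
  exact exists_congr fun j => and_congr_right fun hij => by rw [h j hij]

theorem exists_adj_notMem_of_Nsys_stable {x : Fin L → Bool} {I : Set (Fin L)} {i k : Fin L}
    (hstable : ∀ y ∈ subspace x I, Nsys G y i = x i) (hk : k ∈ I) (hik : G.Adj i k) :
    ∃ j, G.Adj i j ∧ j ∉ I ∧ x j = false := by
  classical
  have hxi : x i = true := by
    have hmem : Function.update x k false ∈ subspace x I := fun j hj =>
      Function.update_of_ne (fun hjk : j = k => hj (hjk ▸ hk)) _ _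
    rw [← hstable _ hmem, Nsys_eq_true_iff]
    exact ⟨k, hik, Function.update_self k false x⟩
  have hmem : I.piecewise (fun _ => true) x ∈ subspace x I := fun j hj =>
    Set.piecewise_eq_of_notMem _ _ _ hj
  obtain ⟨j, hij, hj⟩ := (Nsys_eq_true_iff G _ i).mp ((hstable _ hmem).trans hxi)
  have hjI : j ∉ I := fun hjI => by simp [Set.piecewise_eq_of_mem _ _ _ hjI] at hj
  exact ⟨j, hij, hjI, by rwa [Set.piecewise_eq_of_notMem _ _ _ hjI] at hj⟩

theorem Nsys_stable_of_exists_adj_notMem {x : Fin L → Bool} (hx : Nsys G x = x)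
    {I : Set (Fin L)} {i : Fin L}
    (hwit : (∃ k ∈ I, G.Adj i k) → ∃ j, G.Adj i j ∧ j ∉ I ∧ x j = false) :
    ∀ y ∈ subspace x I, Nsys G y i = x i := by
  intro y hy
  by_cases hnb : ∃ k ∈ I, G.Adj i k
  · obtain ⟨j, hij, hj, hxj⟩ := hwit hnb
    rw [← congrFun hx i, (Nsys_eq_true_iff G y i).mpr ⟨j, hij, (hy j hj).trans hxj⟩,
      (Nsys_eq_true_iff G x i).mpr ⟨j, hij, hxj⟩]
  · push Not at hnb
    rw [← congrFun hx i]
    exact Nsys_congr G fun j hij => hy j fun hj => hnb j hj hij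

end Nsys

theorem stmt10_general {L : ℕ} (G : SimpleGraph (Fin L)) [DecidableRel G.Adj]
    (x : Fin L → Bool) (hx : Nsys G x = x) (I : Set (Fin L)) :
    isTrapSet (Nsys G) {y | ∀ i ∉ I, y i = x i} ↔
      ∀ i ∉ I, (∃ k ∈ I, G.Adj i k) →
        ∃ j, G.Adj i j ∧ j ∉ I ∧ x j = false := by
  refine (isTrapSet_subspace_iff (Nsys G) x I).trans ⟨?_, ?_⟩
  · rintro hstable i hi ⟨k, hk, hik⟩
    exact exists_adj_notMem_of_Nsys_stable G (fun y hy => hstable y hy i hi) hk hik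
  · intro hwit y hy i hi
    exact Nsys_stable_of_exists_adj_notMem G hx (hwit i hi) y hy

theorem stmt10 {L : ℕ} (G : SimpleGraph (Fin L)) [DecidableRel G.Adj]
    (hc : G.Connected) (x : Fin L → Bool) (hx : Nsys G x = x) (I : Set (Fin L)) :
    isTrapSet (Nsys G) {y | ∀ i ∉ I, y i = x i} ↔
      ∀ i ∉ I, (∃ k ∈ I, G.Adj i k) →
        ∃ j, G.Adj i j ∧ j ∉ I ∧ x j = false :=
  stmt10_general G x hx I
end

section
/- For the full Boolean Delta-Notch system F with L ≥ 2 cells, the asynchronous dynamics contains a cycle passing through all four homogeneous states (0,0), (0,1), (1,0), (1,1) (where the first component stands for all Notch levels and the second for all Delta levels being uniformly 0 or 1). More precisely, from (1,0) there is a path to (1,1), from (1,1) to (0,1), from (0,1) to (0,0), and from (0,0) to (1,0). -/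
/-- The full Boolean Delta-Notch system over the cell graph `G`, on states in `B^{2L}`:
the Notch variable of cell `i` is indexed by `Sum.inl i`, the Delta variable by `Sum.inr i`.
Notch is activated by Delta in some neighbouring cell, Delta is inhibited by Notch in the
same cell. -/
def Fsys {L : ℕ} (G : SimpleGraph (Fin L)) [DecidableRel G.Adj]
    (x : Fin L ⊕ Fin L → Bool) : Fin L ⊕ Fin L → Bool :=
  Sum.elim (fun i => decide (∃ j, G.Adj i j ∧ x (Sum.inr j) = true))
    (fun i => !x (Sum.inl i))

/-- The homogeneous state with all Notch levels equal to `a` and all Delta levels equal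
to `b`. -/
def homog {L : ℕ} (a b : Bool) : Fin L ⊕ Fin L → Bool :=
  Sum.elim (fun _ => a) (fun _ => b)

/-! The four homogeneous states lie on the cycle `(1,0) → (0,0) → (0,1) → (1,1) → (1,0)`.
Each arrow resets one species cell by cell: while all Delta levels equal `b`, every Notch
variable is driven towards `b` (every cell has a neighbour, as `G` is connected on at least
two vertices), and while all Notch levels equal `a`, every Delta variable is driven towards
`!a`. The other species is untouched during such a phase, so the variables can be flipped
one at a time. -/

theorem reflTransGen_asyncStep_piecewise {ι : Type*} [DecidableEq ι]
    (f : (ι → Bool) → (ι → Bool)) (x : ι → Bool) (s : Finset ι) (b : Bool)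
    (hf : ∀ z, (∀ j ∉ s, z j = x j) → ∀ i ∈ s, f z i = b) :
    Relation.ReflTransGen (asyncStep f) x (s.piecewise (fun _ => b) x) := by
  induction s using Finset.induction_on with
  | empty => simpa using .refl
  | insert a s ha ih =>
    rw [Finset.piecewise_insert]
    set y := s.piecewise (fun _ => b) x
    have hy : ∀ j ∉ insert a s, y j = x j := fun j hj =>
      Finset.piecewise_eq_of_notMem _ _ _ fun hjs => hj (Finset.mem_insert_of_mem hjs)
    have hxy : Relation.ReflTransGen (asyncStep f) x y := ih fun z hz i hi =>
      hf z (fun j hj => hz j fun hjs => hj (Finset.mem_insert_of_mem hjs)) i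
        (Finset.mem_insert_of_mem hi)
    have hya : y a = x a := Finset.piecewise_eq_of_notMem _ _ _ ha
    have hfy : f y a = b := hf y hy a (Finset.mem_insert_self a s)
    by_cases hxa : x a = b
    · rwa [← hxa, ← hya, Function.update_eq_self]
    · refine hxy.tail ⟨a, by rwa [hfy, hya, ne_comm], ?_⟩
      rw [hya, Bool.eq_not.mpr (Ne.symm hxa)]

section DeltaNotch

variable {L : ℕ} (G : SimpleGraph (Fin L)) [DecidableRel G.Adj]

theorem Fsys_inl_of_forall_delta_eq (z : Fin L ⊕ Fin L → Bool) (b : Bool)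
    (hz : ∀ j, z (Sum.inr j) = b) (i : Fin L) (hi : ∃ j, G.Adj i j) :
    Fsys G z (Sum.inl i) = b := by
  cases b with
  | false => simp [Fsys, hz]
  | true => simpa [Fsys, hz] using hi

theorem Fsys_inr (z : Fin L ⊕ Fin L → Bool) (i : Fin L) :
    Fsys G z (Sum.inr i) = !z (Sum.inl i) := rfl

theorem piecewise_inl_homog (a a' b : Bool) :
    (Finset.univ.map .inl).piecewise (fun _ => a') (homog a b) = homog (L := L) a' b := by
  funext x; cases x <;> simp [homog]

theorem piecewise_inr_homog (a b b' : Bool) :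
    (Finset.univ.map .inr).piecewise (fun _ => b') (homog a b) = homog (L := L) a b' := by
  funext x; cases x <;> simp [homog]

theorem reflTransGen_homog_notch (hG : ∀ i, ∃ j, G.Adj i j) (a b : Bool) :
    Relation.ReflTransGen (asyncStep (Fsys G)) (homog a b) (homog b b) := by
  rw [← piecewise_inl_homog a b b]
  refine reflTransGen_asyncStep_piecewise _ _ _ _ fun z hz x hx => ?_
  obtain ⟨i, -, rfl⟩ := Finset.mem_map.mp hx
  exact Fsys_inl_of_forall_delta_eq G z b (fun j => hz _ (by simp)) i (hG i)

theorem reflTransGen_homog_delta (a b : Bool) :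
    Relation.ReflTransGen (asyncStep (Fsys G)) (homog a b) (homog a (!a)) := by
  rw [← piecewise_inr_homog a b (!a)]
  refine reflTransGen_asyncStep_piecewise _ _ _ _ fun z hz x hx => ?_
  obtain ⟨i, -, rfl⟩ := Finset.mem_map.mp hx
  change Fsys G z (Sum.inr i) = !a
  rw [Fsys_inr, hz _ (by simp), homog, Sum.elim_inl]

end DeltaNotch

theorem stmt15 {L : ℕ} (G : SimpleGraph (Fin L)) [DecidableRel G.Adj]
    (hL : 2 ≤ L) (hc : G.Connected) :
    Relation.ReflTransGen (asyncStep (Fsys G)) (homog true false) (homog true true) ∧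
    Relation.ReflTransGen (asyncStep (Fsys G)) (homog true true) (homog false true) ∧
    Relation.ReflTransGen (asyncStep (Fsys G)) (homog false true) (homog false false) ∧
    Relation.ReflTransGen (asyncStep (Fsys G)) (homog false false) (homog true false) := by
  have : Nontrivial (Fin L) := Fin.nontrivial_iff_two_le.mpr hL
  have hG := hc.preconnected.exists_adj_of_nontrivial
  have h10_00 := reflTransGen_homog_notch G hG true false
  have h00_01 := reflTransGen_homog_delta G false false
  have h01_11 := reflTransGen_homog_notch G hG false true
  have h11_10 := reflTransGen_homog_delta G true true
  exact ⟨h10_00.trans (h00_01.trans h01_11), h11_10.trans (h10_00.trans h00_01),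
    h01_11.trans (h11_10.trans h10_00), h00_01.trans (h01_11.trans h11_10)⟩
end

section
/- If x ∈ B^{2L} is a state of the full Boolean Delta-Notch system F whose minimal trap space is the whole state space B^{2L}, then there exists a path in the asynchronous dynamics of F from x to the state (1,0) with all Notch levels equal to 1 and all Delta levels equal to 0. -/
/-!
Call a set `A` of cells *locked* in a state if its cells have Notch 0 and every neighbour of
`A` has Notch 1, Delta 0 and a neighbour in `A` with Delta 1. Then the Notch values on `A`, the
Delta values 1 on `A` and both values on the neighbours of `A` can never change, so a state in
no proper trap space has no nonempty locked set. From an unlocked state one can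
steer the dynamics by four kinds of moves (charge a Delta under Notch 0, raise a Notch next to
a Delta 1, lower a Delta when the cell and its neighbours have Notch 1, lower a Notch when no
neighbour has Delta 1), each of which keeps the state unlocked under its local side conditions.
They shrink the set of Notch-0 cells: directly if such a cell sees a Delta 1 or another
Notch-0 cell; otherwise that set is not locked, which yields a neighbour `j` of it whose
Notch-0 neighbours all have Delta 0, and one discharges the neighbours of `j`, switches
`j`'s Notch off and raises `j` together with a Notch-0 neighbour. Once every Notch is 1,
lowering every Delta reaches the target.
-/

open Function Relation

theorem reflTransGen_asyncStep_update {ι : Type*} [DecidableEq ι]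
    (f : (ι → Bool) → ι → Bool) (x : ι → Bool) (c : ι) :
    ReflTransGen (asyncStep f) x (update x c (f x c)) := by
  by_cases h : f x c = x c
  · rw [h, update_eq_self]
  · exact .single ⟨c, h, by rw [Bool.eq_not_of_ne h]⟩

theorem isTrapSpace_setOf_forall_eq {ι : Type*} [DecidableEq ι]
    (f : (ι → Bool) → ι → Bool) (x : ι → Bool) (C : Set ι)
    (h : ∀ z, (∀ c ∈ C, z c = x c) → ∀ c ∈ C, f z c = z c) :
    isTrapSpace f {z | ∀ c ∈ C, z c = x c} := by
  refine ⟨⟨x, Cᶜ, by simp⟩, ?_⟩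
  rintro z hz _ ⟨i, hi, rfl⟩ c hc
  have hci : c ≠ i := by
    rintro rfl
    exact hi (h z hz c hc)
  rw [update_of_ne hci]
  exact hz c hc

namespace DeltaNotch

variable {L : ℕ} (G : SimpleGraph (Fin L))

def IsLocked (y : Fin L ⊕ Fin L → Bool) (A : Set (Fin L)) : Prop :=
  ∀ i ∈ A, y (.inl i) = false ∧ ∀ j, G.Adj i j →
    y (.inl j) = true ∧ y (.inr j) = false ∧ ∃ k, G.Adj j k ∧ k ∈ A ∧ y (.inr k) = true

def Unlocked (y : Fin L ⊕ Fin L → Bool) : Prop :=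
  ∀ A : Set (Fin L), A.Nonempty → ¬ IsLocked G y A

variable {G} in
theorem IsLocked.of_update {y : Fin L ⊕ Fin L → Bool} {A : Set (Fin L)} {v : Fin L}
    {c : Fin L ⊕ Fin L} (hc : c = .inl v ∨ c = .inr v) {b : Bool}
    (hA : IsLocked G (update y c b) A) (hv : v ∉ A) (hnv : ∀ a ∈ A, ¬ G.Adj a v) :
    IsLocked G y A := by
  have hyc : ∀ u, (u ∈ A ∨ ∃ a ∈ A, G.Adj a u) →
      update y c b (.inl u) = y (.inl u) ∧ update y c b (.inr u) = y (.inr u) := by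
    rintro u hu
    have huv : u ≠ v := by
      rintro rfl
      exact hu.elim hv fun ⟨a, ha, hav⟩ => hnv a ha hav
    rcases hc with rfl | rfl <;> simp [huv]
  intro i hi
  obtain ⟨hi₁, hi₂⟩ := hA i hi
  refine ⟨(hyc i (.inl hi)).1 ▸ hi₁, fun j hij => ?_⟩
  obtain ⟨hj₁, hj₂, k, hjk, hk, hk₁⟩ := hi₂ j hij
  have hj := hyc j (.inr ⟨i, hi, hij⟩)
  exact ⟨hj.1 ▸ hj₁, hj.2 ▸ hj₂, k, hjk, hk, (hyc k (.inl hk)).2 ▸ hk₁⟩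

variable [DecidableRel G.Adj]

def UnlockedReach (y z : Fin L ⊕ Fin L → Bool) : Prop :=
  ReflTransGen (asyncStep (Fsys G)) y z ∧ Unlocked G z

variable {G}

theorem UnlockedReach.trans {x y z : Fin L ⊕ Fin L → Bool} (hxy : UnlockedReach G x y)
    (hyz : UnlockedReach G y z) : UnlockedReach G x z :=
  ⟨hxy.1.trans hyz.1, hyz.2⟩

theorem unlocked_of_forall_isTrapSpace {x : Fin L ⊕ Fin L → Bool}
    (hx : ∀ T, isTrapSpace (Fsys G) T → x ∈ T → T = Set.univ) : Unlocked G x := by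
  rintro A ⟨a, ha⟩ hA
  let C : Set (Fin L ⊕ Fin L) := {c | Sum.elim (fun v => v ∈ A ∨ ∃ i ∈ A, G.Adj i v)
      (fun v => (v ∈ A ∧ x (.inr v) = true) ∨ ∃ i ∈ A, G.Adj i v) c}
  have hT : isTrapSpace (Fsys G) {z | ∀ c ∈ C, z c = x c} := by
    refine isTrapSpace_setOf_forall_eq _ x C fun z hz c hc => ?_
    have hAz : ∀ i ∈ A, z (.inl i) = false := fun i hi =>
      (hz (.inl i) (Or.inl hi)).trans (hA i hi).1
    have hNz : ∀ i ∈ A, ∀ j, G.Adj i j → z (.inl j) = true ∧ z (.inr j) = false :=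
      fun i hi j hij => ⟨(hz (.inl j) (Or.inr ⟨i, hi, hij⟩)).trans ((hA i hi).2 j hij).1,
        (hz (.inr j) (Or.inr ⟨i, hi, hij⟩)).trans ((hA i hi).2 j hij).2.1⟩
    rcases c with v | v <;> rcases hc with hv | ⟨i, hi, hiv⟩
    · simpa [Fsys, hAz v hv] using fun j hvj => (hNz v hv j hvj).2
    · obtain ⟨-, -, k, hvk, hk, hxk⟩ := (hA i hi).2 v hiv
      simpa [Fsys, (hNz i hi v hiv).1] using
        ⟨k, hvk, (hz (.inr k) (Or.inl ⟨hk, hxk⟩)).trans hxk⟩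
    · simp [Fsys, hAz v hv.1, (hz (.inr v) (Or.inl hv)).trans hv.2]
    · simp [Fsys, hNz i hi v hiv]
  have hmem : (fun _ => true) ∈ {z | ∀ c ∈ C, z c = x c} := by
    rw [hx _ hT fun _ _ => rfl]
    trivial
  simpa [(hA a ha).1] using hmem (.inl a) (Or.inl ha)

variable {y : Fin L ⊕ Fin L → Bool} {v w : Fin L}

theorem Unlocked.reach_update {c : Fin L ⊕ Fin L} {b : Bool} (hy : Unlocked G y)
    (hc : c = .inl v ∨ c = .inr v) (hb : Fsys G y c = b)
    (hlock : ∀ A, IsLocked G (update y c b) A → v ∉ A ∧ ∀ a ∈ A, ¬ G.Adj a v) :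
    UnlockedReach G y (update y c b) := by
  subst hb
  exact ⟨reflTransGen_asyncStep_update _ y c, fun A hne hA =>
    hy A hne (hA.of_update hc (hlock A hA).1 (hlock A hA).2)⟩

theorem Unlocked.reach_chargeDelta (hy : Unlocked G y) (hv : y (.inl v) = false)
    (hvw : G.Adj v w) (hw : y (.inl w) = false ∨ y (.inr w) = true) :
    UnlockedReach G y (update y (.inr v) true) := by
  refine hy.reach_update (.inr rfl) (by simp [Fsys, hv])
    fun A hA => ⟨fun hvA => ?_, fun a ha hav => ?_⟩
  · obtain ⟨hw₁, hw₂, -⟩ := (hA v hvA).2 w hvw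
    simp [hvw.ne'] at hw₁ hw₂
    simp [hw₁, hw₂] at hw
  · simpa using ((hA a ha).2 v hav).2.1

theorem Unlocked.reach_raiseNotch (hy : Unlocked G y) (hv : y (.inr v) = true)
    (hvw : G.Adj v w) (hw : y (.inr w) = true) :
    UnlockedReach G y (update y (.inl v) true) := by
  refine hy.reach_update (.inl rfl) (by simpa [Fsys] using ⟨w, hvw, hw⟩)
    fun A hA => ⟨fun hvA => ?_, fun a ha hav => ?_⟩
  · simpa using (hA v hvA).1
  · simpa [hv] using ((hA a ha).2 v hav).2.1

theorem Unlocked.reach_lowerDelta (hy : Unlocked G y) (hv : y (.inl v) = true)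
    (hnv : ∀ w, G.Adj v w → y (.inl w) = true) :
    UnlockedReach G y (update y (.inr v) false) := by
  refine hy.reach_update (.inr rfl) (by simp [Fsys, hv])
    fun A hA => ⟨fun hvA => ?_, fun a ha hav => ?_⟩
  · simpa [hv] using (hA v hvA).1
  · simpa [hnv a hav.symm] using (hA a ha).1

theorem Unlocked.reach_lowerNotch (hy : Unlocked G y)
    (hnv : ∀ w, G.Adj v w → y (.inr w) = false)
    (hvw : G.Adj v w) (hw : y (.inl w) = false) :
    UnlockedReach G y (update y (.inl v) false) := by
  refine hy.reach_update (.inl rfl) (by simpa [Fsys] using fun w hvw => hnv w hvw)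
    fun A hA => ⟨fun hvA => ?_, fun a ha hav => ?_⟩
  · simpa [hvw.ne', hw] using ((hA v hvA).2 w hvw).1
  · simpa using ((hA a ha).2 v hav).1

def raiseCell (y : Fin L ⊕ Fin L → Bool) (i : Fin L) : Fin L ⊕ Fin L → Bool :=
  update (update y (.inr i) true) (.inl i) true

theorem Unlocked.reach_raiseCell (hy : Unlocked G y) (hv : y (.inl v) = false)
    (hvw : G.Adj v w) (hw : y (.inr w) = true) : UnlockedReach G y (raiseCell y v) := by
  have h₁ := hy.reach_chargeDelta hv hvw (.inr hw)
  exact h₁.trans (h₁.2.reach_raiseNotch (by simp) hvw (by simp [hvw.ne', hw]))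

def notchOff (y : Fin L ⊕ Fin L → Bool) : Finset (Fin L) :=
  Finset.univ.filter fun i => y (.inl i) = false

@[simp]
theorem notchOff_update_inr (y : Fin L ⊕ Fin L → Bool) (i : Fin L) (b : Bool) :
    notchOff (update y (.inr i) b) = notchOff y := by
  ext; simp [notchOff]

theorem notchOff_update_inl_false (y : Fin L ⊕ Fin L → Bool) (i : Fin L) :
    notchOff (update y (.inl i) false) = insert i (notchOff y) := by
  ext u; by_cases hu : u = i <;> simp [notchOff, update_apply, hu]

theorem notchOff_raiseCell (y : Fin L ⊕ Fin L → Bool) (i : Fin L) :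
    notchOff (raiseCell y i) = (notchOff y).erase i := by
  ext u; by_cases hu : u = i <;> simp [notchOff, raiseCell, update_apply, hu]

theorem Unlocked.exists_reach_of_adj (hy : Unlocked G y) (hvw : G.Adj v w)
    (hv : y (.inl v) = false) (hw : y (.inl w) = false) :
    ∃ z, UnlockedReach G y z ∧ notchOff z = ((notchOff y).erase w).erase v := by
  have h₁ := hy.reach_chargeDelta hv hvw (.inl hw)
  have h₂ := h₁.2.reach_raiseCell (by simp [hw]) hvw.symm (by simp)
  have h₃ := h₂.2.reach_raiseCell (v := v) (w := w) (by simp [raiseCell, hvw.ne, hv]) hvw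
    (by simp [raiseCell])
  exact ⟨_, h₁.trans (h₂.trans h₃), by simp [notchOff_raiseCell]⟩

theorem Unlocked.exists_reach_clearDelta (hy : Unlocked G y) (s : Finset (Fin L))
    (hs : ∀ k ∈ s, y (.inl k) = true ∧ ∀ w, G.Adj k w → y (.inl w) = true) :
    ∃ z, UnlockedReach G y z ∧ (∀ u, z (.inl u) = y (.inl u)) ∧
      (∀ k ∈ s, z (.inr k) = false) ∧ ∀ k ∉ s, z (.inr k) = y (.inr k) := by
  induction s using Finset.induction_on with
  | empty => exact ⟨y, ⟨.refl, hy⟩, fun _ => rfl, by simp, fun _ _ => rfl⟩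
  | insert a s ha ih =>
    obtain ⟨z, hz, hzl, hzs, hzs'⟩ := ih fun k hk => hs k (Finset.mem_insert_of_mem hk)
    obtain ⟨ha₁, ha₂⟩ := hs a (Finset.mem_insert_self a s)
    refine ⟨_, hz.trans (hz.2.reach_lowerDelta (v := a) (by rw [hzl, ha₁])
      fun w haw => by rw [hzl, ha₂ w haw]), fun u => by simp [hzl], fun k hk => ?_,
      fun k hk => ?_⟩
    · by_cases hka : k = a
      · simp [hka]
      · simp [hka, hzs k ((Finset.mem_insert.1 hk).resolve_left hka)]
    · rw [Finset.mem_insert, not_or] at hk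
      simp [hk.1, hzs' k hk.2]

theorem Unlocked.reach_target_of_notchOff_eq_empty (hy : Unlocked G y)
    (h : notchOff y = ∅) :
    ReflTransGen (asyncStep (Fsys G)) y (Sum.elim (fun _ => true) (fun _ => false)) := by
  have hn : ∀ u, y (.inl u) = true := by simpa [notchOff, Finset.filter_eq_empty_iff] using h
  obtain ⟨z, hz, hzl, hzs, -⟩ :=
    hy.exists_reach_clearDelta Finset.univ fun k _ => ⟨hn k, fun w _ => hn w⟩
  convert hz.1
  funext c
  rcases c with u | u
  · simp [hzl, hn]
  · simp [hzs]

theorem Unlocked.exists_reach_notchOff_ssubset_of_isolated (hy : Unlocked G y)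
    (hne : (notchOff y).Nonempty)
    (hA : ∀ i w, y (.inl i) = false → G.Adj i w → y (.inr w) = false)
    (hB : ∀ i j, G.Adj i j → y (.inl i) = false → y (.inl j) = true) :
    ∃ z, UnlockedReach G y z ∧ notchOff z ⊂ notchOff y := by
  obtain ⟨i, j, hi, hij, hj⟩ : ∃ i j, y (.inl i) = false ∧ G.Adj i j ∧
      ∀ k, G.Adj j k → y (.inl k) = false → y (.inr k) = false := by
    by_contra! h
    obtain ⟨a, ha⟩ := hne
    refine hy {i | y (.inl i) = false} ⟨a, by simpa [notchOff] using ha⟩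
      fun i hi => ⟨hi, fun j hij => ⟨hB i j hij hi, hA i j hi hij, ?_⟩⟩
    obtain ⟨k, hjk, hk, hk'⟩ := h i j hi hij
    exact ⟨k, hjk, hk, by simpa using hk'⟩
  let s := Finset.univ.filter fun k => G.Adj j k ∧ y (.inr k) = true
  obtain ⟨z, hz, hzl, hzs, hzs'⟩ := hy.exists_reach_clearDelta s fun k hk => by
    simp only [s, Finset.mem_filter, Finset.mem_univ, true_and] at hk
    refine ⟨?_, fun w hkw => ?_⟩
    · by_contra h
      simpa [hk.2] using hj k hk.1 (by simpa using h)
    · by_contra h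
      simpa [hk.2] using hA w k (by simpa using h) hkw.symm
  have hzj : ∀ k, G.Adj j k → z (.inr k) = false := fun k hjk => by
    by_cases hk : k ∈ s
    · exact hzs k hk
    · simpa [hzs' k hk, s, hjk] using hk
  have h₁ := hz.2.reach_lowerNotch hzj hij.symm (by rw [hzl, hi])
  obtain ⟨z', h₂, hz'⟩ := h₁.2.exists_reach_of_adj hij (by simp [hij.ne, hzl, hi]) (by simp)
  have hzZ : notchOff z = notchOff y := by
    ext
    simp [notchOff, hzl]
  refine ⟨z', hz.trans (h₁.trans h₂), ?_⟩
  rw [hz', notchOff_update_inl_false, hzZ, Finset.erase_insert_eq_erase]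
  exact (Finset.erase_ssubset (by simpa [notchOff, hij.ne] using hi)).trans_subset
    (Finset.erase_subset _ _)

theorem Unlocked.exists_reach_notchOff_ssubset (hy : Unlocked G y)
    (hne : (notchOff y).Nonempty) :
    ∃ z, UnlockedReach G y z ∧ notchOff z ⊂ notchOff y := by
  by_cases hA : ∃ i w, y (.inl i) = false ∧ G.Adj i w ∧ y (.inr w) = true
  · obtain ⟨i, w, hi, hiw, hw⟩ := hA
    refine ⟨_, hy.reach_raiseCell hi hiw hw, ?_⟩
    rw [notchOff_raiseCell]
    exact Finset.erase_ssubset (by simpa [notchOff] using hi)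
  by_cases hB : ∃ i j, G.Adj i j ∧ y (.inl i) = false ∧ y (.inl j) = false
  · obtain ⟨i, j, hij, hi, hj⟩ := hB
    obtain ⟨z, hz, hzZ⟩ := hy.exists_reach_of_adj hij hi hj
    refine ⟨z, hz, hzZ ▸ ?_⟩
    exact (Finset.erase_ssubset (by simpa [notchOff, hij.ne] using hi)).trans_subset
      (Finset.erase_subset _ _)
  push Not at hA hB
  exact hy.exists_reach_notchOff_ssubset_of_isolated hne (by simpa using hA) (by simpa using hB)

theorem Unlocked.reach_target (hy : Unlocked G y) :
    ReflTransGen (asyncStep (Fsys G)) y (Sum.elim (fun _ => true) (fun _ => false)) := by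
  induction hn : (notchOff y).card using Nat.strong_induction_on generalizing y with
  | _ n ih =>
    rcases (notchOff y).eq_empty_or_nonempty with h | h
    · exact hy.reach_target_of_notchOff_eq_empty h
    · obtain ⟨z, hz, hzy⟩ := hy.exists_reach_notchOff_ssubset h
      exact hz.1.trans (ih _ (hn ▸ Finset.card_lt_card hzy) hz.2 rfl)

end DeltaNotch

theorem stmt17_general {L : ℕ} (G : SimpleGraph (Fin L)) [DecidableRel G.Adj]
    (x : Fin L ⊕ Fin L → Bool)
    (hx : ∀ A : Set (Fin L ⊕ Fin L → Bool), isTrapSpace (Fsys G) A → x ∈ A →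
      A = Set.univ) :
    Relation.ReflTransGen (asyncStep (Fsys G)) x
      (Sum.elim (fun _ => true) (fun _ => false)) :=
  (DeltaNotch.unlocked_of_forall_isTrapSpace hx).reach_target

theorem stmt17 {L : ℕ} (G : SimpleGraph (Fin L)) [DecidableRel G.Adj]
    (hc : G.Connected) (x : Fin L ⊕ Fin L → Bool)
    (hx : ∀ A : Set (Fin L ⊕ Fin L → Bool), isTrapSpace (Fsys G) A → x ∈ A →
      A = Set.univ) :
    Relation.ReflTransGen (asyncStep (Fsys G)) x
      (Sum.elim (fun _ => true) (fun _ => false)) :=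
  stmt17_general G x hx
end

section
/- For every state y ∈ B^{2L} and every fixed point x of the full Boolean Delta-Notch system F contained in κ(y), the minimal trap space containing y, there exists a path in the asynchronous dynamics of F from y to x. -/
/-!
Let `U` be the set of cells whose Delta is on in the fixed point `x`. Then `x` has every cell of
`U` at `(n, d) = (F, T)` and every other cell at `(T, F)`, and `U` is a maximal independent set of
`G`. The only way a trap space can keep `x` away from `y` is a *blocked* cell `k ∉ U`: in `y`, cell
`k` is at `(F, T)` and all its neighbours are at `(T, F)`. These values are frozen forever, so
they span a trap space that contains `y` but not `x`. Starting from a state without a blocked cell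
outside `U`, some single enabled flip always strictly decreases an explicit potential without
creating one, unless the state already is `x`.
-/

open Function Relation

theorem Relation.ReflTransGen.of_measure_descent {α : Type*} {r : α → α → Prop} (μ : α → ℕ)
    {P : α → Prop} {a b : α} (h : ∀ z, P z → z ≠ b → ∃ z', r z z' ∧ P z' ∧ μ z' < μ z)
    (ha : P a) : ReflTransGen r a b := by
  induction hμ : μ a using Nat.strong_induction_on generalizing a with
  | _ n ih =>
    by_cases hab : a = b
    · exact hab ▸ .refl
    obtain ⟨a', hstep, ha', hlt⟩ := h a ha hab
    exact .head hstep (ih _ (hμ ▸ hlt) ha' rfl)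

theorem isTrapSpace_subspace {ι : Type*} [DecidableEq ι] {f : (ι → Bool) → ι → Bool}
    (z : ι → Bool) (I : Set ι) (h : ∀ w, (∀ i ∉ I, w i = z i) → ∀ i ∉ I, f w i = w i) :
    isTrapSpace f {w | ∀ i ∉ I, w i = z i} := by
  refine ⟨⟨z, I, rfl⟩, ?_⟩
  rintro w hw _ ⟨c, hc, rfl⟩ i hi
  have hic : i ≠ c := by rintro rfl; exact hc (h w hw i hi)
  rw [update_of_ne hic]
  exact hw i hi

namespace DeltaNotch

variable {L : ℕ} {G : SimpleGraph (Fin L)}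

def cellOf : Fin L ⊕ Fin L → Fin L := Sum.elim id id

@[simp] theorem cellOf_inl (i : Fin L) : cellOf (.inl i) = i := rfl

@[simp] theorem cellOf_inr (i : Fin L) : cellOf (.inr i) = i := rfl

variable (G) in
def IsBlocked (z : Fin L ⊕ Fin L → Bool) (k : Fin L) : Prop :=
  z (.inl k) = false ∧ z (.inr k) = true ∧
    ∀ j, G.Adj k j → z (.inl j) = true ∧ z (.inr j) = false

theorem IsBlocked.of_agree {z w : Fin L ⊕ Fin L → Bool} {k : Fin L} (hw : IsBlocked G w k)
    (h : ∀ c, k = cellOf c ∨ G.Adj k (cellOf c) → z c = w c) : IsBlocked G z k := by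
  obtain ⟨hn, hd, hnbr⟩ := hw
  refine ⟨(h _ (by simp)).trans hn, (h _ (by simp)).trans hd, fun j hj => ?_⟩
  exact ⟨(h _ (by simp [hj])).trans (hnbr j hj).1, (h _ (by simp [hj])).trans (hnbr j hj).2⟩

variable [DecidableRel G.Adj]

@[simp]
theorem Fsys_inl (z : Fin L ⊕ Fin L → Bool) (i : Fin L) :
    Fsys G z (.inl i) = decide (∃ j, G.Adj i j ∧ z (.inr j) = true) := rfl

@[simp]
theorem Fsys_inr (z : Fin L ⊕ Fin L → Bool) (i : Fin L) : Fsys G z (.inr i) = !z (.inl i) := rfl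

section FixedPoint

variable {x : Fin L ⊕ Fin L → Bool}

theorem notch_eq_not_delta (hx : Fsys G x = x) (i : Fin L) : x (.inl i) = !x (.inr i) := by
  rw [← congrFun hx (.inr i), Fsys_inr, Bool.not_not]

theorem delta_eq_false_of_adj (hx : Fsys G x = x) {i j : Fin L} (hij : G.Adj i j)
    (hi : x (.inr i) = true) : x (.inr j) = false := by
  have h := congrFun hx (.inl i)
  rw [Fsys_inl, notch_eq_not_delta hx, hi] at h
  simpa using fun h' : x (.inr j) = true => of_decide_eq_false h ⟨j, hij, h'⟩

theorem exists_adj_delta (hx : Fsys G x = x) {i : Fin L} (hi : x (.inr i) = false) :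
    ∃ j, G.Adj i j ∧ x (.inr j) = true := by
  have h := congrFun hx (.inl i)
  rw [Fsys_inl, notch_eq_not_delta hx, hi] at h
  exact of_decide_eq_true h

end FixedPoint

theorem IsBlocked.Fsys_apply {w : Fin L ⊕ Fin L → Bool} {k : Fin L} (hw : IsBlocked G w k)
    {c : Fin L ⊕ Fin L} (hc : k = cellOf c ∨ G.Adj k (cellOf c)) : Fsys G w c = w c := by
  obtain ⟨hn, hd, hnbr⟩ := hw
  rcases c with i | i <;> simp only [cellOf_inl, cellOf_inr] at hc <;> rcases hc with rfl | hki
  · simp only [Fsys_inl, hn, decide_eq_false_iff_not, not_exists, not_and]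
    intro j hij hj
    simp [(hnbr j hij).2] at hj
  · simpa [(hnbr i hki).1] using ⟨k, hki.symm, hd⟩
  · simp [hn, hd]
  · simp [(hnbr i hki).1, (hnbr i hki).2]

theorem delta_eq_true_of_isBlocked {x y : Fin L ⊕ Fin L → Bool}
    (hmem : ∀ A, isTrapSpace (Fsys G) A → y ∈ A → x ∈ A) {k : Fin L} (hy : IsBlocked G y k) :
    x (.inr k) = true := by
  have hA := hmem _ (isTrapSpace_subspace y {c | ¬(k = cellOf c ∨ G.Adj k (cellOf c))}
    fun w hw c hc => (hy.of_agree fun c' hc' => hw c' (not_not.2 hc')).Fsys_apply (not_not.1 hc))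
    fun _ _ => rfl
  rw [hA (.inr k) (by simp), hy.2.1]

/-- Flips a cell with target Delta `dx` still needs from `(n, d)`: for `dx = false` along
`(F, F) → (F, T) → (T, T) → (T, F)`, for `dx = true` the Hamming distance to `(F, T)`. -/
def stepsToTarget : Bool → Bool → Bool → ℕ
  | true, n, d => n.toNat + (!d).toNat
  | false, true, false => 0
  | false, true, true => 1
  | false, false, true => 2
  | false, false, false => 3

def cellPotential (x z : Fin L ⊕ Fin L → Bool) (i : Fin L) : ℕ :=
  stepsToTarget (x (.inr i)) (z (.inl i)) (z (.inr i))

def potential (x z : Fin L ⊕ Fin L → Bool) : ℕ := ∑ i, cellPotential x z i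

theorem cellPotential_update_of_ne {x z : Fin L ⊕ Fin L → Bool} {c : Fin L ⊕ Fin L} (b : Bool)
    {i : Fin L} (hi : i ≠ cellOf c) : cellPotential x (update z c b) i = cellPotential x z i := by
  rcases c with j | j <;> simp only [cellOf_inl, cellOf_inr] at hi <;>
    simp [cellPotential, hi]

theorem potential_update_lt {x z : Fin L ⊕ Fin L → Bool} {c : Fin L ⊕ Fin L} {b : Bool}
    (h : cellPotential x (update z c b) (cellOf c) < cellPotential x z (cellOf c)) :
    potential x (update z c b) < potential x z := by
  refine Finset.sum_lt_sum (fun i _ => ?_) ⟨_, Finset.mem_univ _, h⟩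
  rcases eq_or_ne i (cellOf c) with rfl | hi
  · exact h.le
  · exact (cellPotential_update_of_ne b hi).le

variable (G) in
def Admissible (x z : Fin L ⊕ Fin L → Bool) : Prop := ∀ k, IsBlocked G z k → x (.inr k) = true

variable (G) in
def CanDescend (x z : Fin L ⊕ Fin L → Bool) : Prop :=
  ∃ z', asyncStep (Fsys G) z z' ∧ Admissible G x z' ∧ potential x z' < potential x z

theorem canDescend_of_flip {x z : Fin L ⊕ Fin L → Bool} (hz : Admissible G x z)
    (c : Fin L ⊕ Fin L) (hen : Fsys G z c ≠ z c)
    (hpot : cellPotential x (update z c (!z c)) (cellOf c) < cellPotential x z (cellOf c))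
    (hblk : ∀ k, k = cellOf c ∨ G.Adj k (cellOf c) →
      IsBlocked G (update z c (!z c)) k → x (.inr k) = true) :
    CanDescend G x z := by
  refine ⟨_, ⟨c, hen, rfl⟩, fun k hk => ?_, potential_update_lt hpot⟩
  by_cases hnear : k = cellOf c ∨ G.Adj k (cellOf c)
  · exact hblk k hnear hk
  refine hz k (hk.of_agree fun c' hc' => (update_of_ne ?_ _ _).symm)
  rintro rfl
  exact hnear hc'

section Terminal

variable {x z : Fin L ⊕ Fin L → Bool}

theorem delta_eq_true_of_notch_eq_false (hz : Admissible G x z) (hstuck : ¬CanDescend G x z)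
    {i : Fin L} (hxi : x (.inr i) = true) (hn : z (.inl i) = false) : z (.inr i) = true := by
  by_contra! hd
  simp only [ne_eq, Bool.not_eq_true] at hd
  refine hstuck (canDescend_of_flip hz (.inr i) (by simp [hn, hd])
    (by simp [cellPotential, stepsToTarget, hxi, hn, hd]) ?_)
  rintro k (rfl | hki) hb
  · exact hxi
  · simpa [hd] using (hb.2.2 _ hki).2

theorem neighbor_delta_eq_false (hz : Admissible G x z) (hstuck : ¬CanDescend G x z)
    {k j : Fin L} (hxk : x (.inr k) = false) (hn : z (.inl k) = false) (hd : z (.inr k) = true)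
    (hkj : G.Adj k j) : z (.inr j) = false := by
  by_contra! hdj
  simp only [ne_eq, Bool.not_eq_false] at hdj
  refine hstuck (canDescend_of_flip hz (.inl k) (by simpa [hn] using ⟨j, hkj, hdj⟩)
    (by simp [cellPotential, stepsToTarget, hxk, hn, hd]) ?_)
  rintro k' (rfl | hk'k) hb
  · simpa [hn] using hb.1
  · simpa [hd] using (hb.2.2 _ hk'k).2

theorem delta_eq_false_of_notch_eq_true (hz : Admissible G x z) (hstuck : ¬CanDescend G x z)
    {i : Fin L} (hxi : x (.inr i) = false) (hn : z (.inl i) = true) : z (.inr i) = false := by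
  by_contra! hd
  simp only [ne_eq, Bool.not_eq_false] at hd
  refine hstuck (canDescend_of_flip hz (.inr i) (by simp [hn, hd])
    (by simp [cellPotential, stepsToTarget, hxi, hn, hd]) ?_)
  rintro k (rfl | hki) hb
  · simpa [hn] using hb.1
  · -- a neighbour blocked after the flip could have raised its Notch instead
    cases hxk : x (.inr k)
    · have hki' : k ≠ i := G.ne_of_adj hki
      have := neighbor_delta_eq_false hz hstuck hxk (by simpa using hb.1)
        (by simpa [hki'] using hb.2.1) hki
      simp [hd] at this
    · rfl

theorem exists_neighbor_delta_of_notch_eq_true (hz : Admissible G x z) (hstuck : ¬CanDescend G x z)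
    {i : Fin L} (hxi : x (.inr i) = true) (hn : z (.inl i) = true) :
    ∃ j, G.Adj i j ∧ z (.inr j) = true := by
  by_contra! h
  refine hstuck (canDescend_of_flip hz (.inl i) (by simpa [hn] using h)
    (by cases hd : z (.inr i) <;> simp [cellPotential, stepsToTarget, hxi, hn, hd]) ?_)
  rintro k (rfl | hki) hb
  · exact hxi
  · simpa [hn] using (hb.2.2 _ hki).1

theorem neighbor_notch_on_delta_off (hz : Admissible G x z)
    (hstuck : ¬CanDescend G x z) {m j : Fin L} (hxm : x (.inr m) = false)
    (hn : z (.inl m) = false) (hd : z (.inr m) = false) (hmj : G.Adj m j) :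
    z (.inl j) = true ∧ z (.inr j) = false := by
  by_contra hj
  refine hstuck (canDescend_of_flip hz (.inr m) (by simp [hn, hd])
    (by simp [cellPotential, stepsToTarget, hxm, hn, hd]) ?_)
  rintro k (rfl | hkm) hb
  · simpa [(G.ne_of_adj hmj).symm, hj] using hb.2.2 j hmj
  · simpa [hd] using (hb.2.2 _ hkm).2

theorem delta_eq_false_of_stuck (hz : Admissible G x z) (hstuck : ¬CanDescend G x z) {j : Fin L}
    (hxj : x (.inr j) = false) : z (.inr j) = false := by
  cases hd : z (.inr j)
  · rfl
  cases hn : z (.inl j)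
  · refine absurd (hz j ⟨hn, hd, fun j' hjj' => ?_⟩) (by simp [hxj])
    have hdj' := neighbor_delta_eq_false hz hstuck hxj hn hd hjj'
    refine ⟨?_, hdj'⟩
    cases hnj' : z (.inl j')
    · cases hxj' : x (.inr j')
      · simpa [hn] using neighbor_notch_on_delta_off hz hstuck hxj' hnj' hdj'
          hjj'.symm
      · simpa [hdj'] using delta_eq_true_of_notch_eq_false hz hstuck hxj' hnj'
    · rfl
  · simpa [hd] using delta_eq_false_of_notch_eq_true hz hstuck hxj hn

theorem notch_eq_false_of_stuck (hx : Fsys G x = x) (hz : Admissible G x z)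
    (hstuck : ¬CanDescend G x z) {i : Fin L} (hxi : x (.inr i) = true) : z (.inl i) = false := by
  cases hn : z (.inl i)
  · rfl
  obtain ⟨j, hij, hdj⟩ := exists_neighbor_delta_of_notch_eq_true hz hstuck hxi hn
  simp [delta_eq_false_of_stuck hz hstuck (delta_eq_false_of_adj hx hij hxi)] at hdj

theorem notch_eq_true_of_stuck (hx : Fsys G x = x) (hz : Admissible G x z)
    (hstuck : ¬CanDescend G x z) {i : Fin L} (hxi : x (.inr i) = false) : z (.inl i) = true := by
  cases hn : z (.inl i)
  · obtain ⟨u, hiu, hxu⟩ := exists_adj_delta hx hxi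
    simpa [notch_eq_false_of_stuck hx hz hstuck hxu] using
      (neighbor_notch_on_delta_off hz hstuck hxi hn
        (delta_eq_false_of_stuck hz hstuck hxi) hiu).1
  · rfl

theorem eq_of_not_canDescend (hx : Fsys G x = x) (hz : Admissible G x z)
    (hstuck : ¬CanDescend G x z) : z = x := by
  funext c
  rcases c with i | i <;> cases hxi : x (.inr i)
  · simp [notch_eq_not_delta hx, hxi, notch_eq_true_of_stuck hx hz hstuck hxi]
  · simp [notch_eq_not_delta hx, hxi, notch_eq_false_of_stuck hx hz hstuck hxi]
  · exact delta_eq_false_of_stuck hz hstuck hxi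
  · simpa [notch_eq_false_of_stuck hx hz hstuck hxi] using
      delta_eq_true_of_notch_eq_false hz hstuck hxi

end Terminal

end DeltaNotch

theorem stmt18_general {L : ℕ} (G : SimpleGraph (Fin L)) [DecidableRel G.Adj]
    (y x : Fin L ⊕ Fin L → Bool) (hx : Fsys G x = x)
    (hmem : ∀ A : Set (Fin L ⊕ Fin L → Bool), isTrapSpace (Fsys G) A → y ∈ A → x ∈ A) :
    Relation.ReflTransGen (asyncStep (Fsys G)) y x := by
  open DeltaNotch in
  refine Relation.ReflTransGen.of_measure_descent (potential x) (P := Admissible G x) ?_ ?_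
  · intro z hz hzx
    by_contra hstuck
    exact hzx (eq_of_not_canDescend hx hz hstuck)
  · exact fun _ => delta_eq_true_of_isBlocked hmem

theorem stmt18 {L : ℕ} (G : SimpleGraph (Fin L)) [DecidableRel G.Adj]
    (hc : G.Connected) (y x : Fin L ⊕ Fin L → Bool) (hx : Fsys G x = x)
    (hmem : ∀ A : Set (Fin L ⊕ Fin L → Bool), isTrapSpace (Fsys G) A → y ∈ A → x ∈ A) :
    Relation.ReflTransGen (asyncStep (Fsys G)) y x :=
  stmt18_general G y x hx hmem
end
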